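/- arXiv:2204.12161 — 2 statements merged into one kernel-verified Lean document; each statement's English description precedes it below -/
import Mathlib

section
/- Let Ω be homogeneous of degree 0 and bounded on S^{n−1}, and let 1 < q < ∞. There exists a constant C > 0 such that ‖T_2 f‖_{L^q(ℝ^n)} ≤ C ‖Ω‖_{L^∞(S^{n−1})} · β^{(q−1)n/q} / (n(q−1) − βq)^{1/q} · ‖f‖_{L^1(ℝ^n)} holds for all f ∈ L^1(ℝ^n) and all 0 < β < (q−1)n/q, where T_2 is the far part of T_β. -/
open MeasureTheory Filter Metric Set ENNReal NNReal

noncomputable section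

/-- `Ω` is homogeneous of degree `0` away from the origin. -/
def HomogZero (n : ℕ) (Om : EuclideanSpace ℝ (Fin n) → ℝ) : Prop :=
  ∀ r : ℝ, 0 < r → ∀ x : EuclideanSpace ℝ (Fin n), x ≠ 0 → Om (r • x) = Om x

/-- `Ω` is bounded on the unit sphere. -/
def BoundedOnSphere (n : ℕ) (Om : EuclideanSpace ℝ (Fin n) → ℝ) : Prop :=
  ∃ M : ℝ, ∀ x : EuclideanSpace ℝ (Fin n), ‖x‖ = 1 → |Om x| ≤ M

/-- The sup norm `‖Ω‖_{L^∞(S^{n-1})}` of `Ω` on the unit sphere. -/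
def sphereSupNorm (n : ℕ) (Om : EuclideanSpace ℝ (Fin n) → ℝ) : ℝ :=
  sSup {t : ℝ | ∃ x : EuclideanSpace ℝ (Fin n), ‖x‖ = 1 ∧ t = |Om x|}

/-- `Ω` has mean zero on the unit sphere (w.r.t. the surface measure). -/
def MeanZeroOnSphere (n : ℕ) (Om : EuclideanSpace ℝ (Fin n) → ℝ) : Prop :=
  ∫ x : Metric.sphere (0 : EuclideanSpace ℝ (Fin n)) 1, Om x
      ∂((volume : Measure (EuclideanSpace ℝ (Fin n))).toSphere) = 0

/-- The modulus of continuity `ω_∞(δ)` of `Ω` on the unit sphere. -/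
def modOmega (n : ℕ) (Om : EuclideanSpace ℝ (Fin n) → ℝ) (δ : ℝ) : ℝ :=
  sSup {t : ℝ | ∃ x y : EuclideanSpace ℝ (Fin n),
    ‖x‖ = 1 ∧ ‖y‖ = 1 ∧ ‖x - y‖ ≤ δ ∧ t = |Om x - Om y|}

/-- The Dini condition `∫_0^1 ω_∞(δ)/δ dδ < ∞`. -/
def DiniCond (n : ℕ) (Om : EuclideanSpace ℝ (Fin n) → ℝ) : Prop :=
  IntegrableOn (fun δ : ℝ => modOmega n Om δ / δ) (Set.Ioo 0 1)

/-- The `α`-Dini condition `∫_0^1 ω_∞(δ)/δ^{1+α} dδ < ∞`. -/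
def AlphaDiniCond (n : ℕ) (Om : EuclideanSpace ℝ (Fin n) → ℝ) (α : ℝ) : Prop :=
  IntegrableOn (fun δ : ℝ => modOmega n Om δ / δ ^ (1 + α)) (Set.Ioo 0 1)

/-- The singular integral `T_β f(x) = p.v. ∫ Ω(y) |y|^{β-n} f(x-y) dy`. -/
def Tbeta (n : ℕ) (Om : EuclideanSpace ℝ (Fin n) → ℝ) (β : ℝ)
    (f : EuclideanSpace ℝ (Fin n) → ℝ) (x : EuclideanSpace ℝ (Fin n)) : ℝ :=
  limUnder (nhdsWithin (0 : ℝ) (Set.Ioi 0)) fun ε : ℝ =>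
    ∫ y in {y : EuclideanSpace ℝ (Fin n) | ε < ‖y‖},
      Om y * ‖y‖ ^ (β - n) * f (x - y)

/-- The cut-off function properties: `χ ∈ C_c^∞`, `0 ≤ χ ≤ 1`, `|χ'| ≤ 2`,
`χ = 1` on `{|s| ≤ 1}` and `χ = 0` on `{|s| > 2}`. -/
def IsCutoff (χ : ℝ → ℝ) : Prop :=
  ContDiff ℝ (⊤ : ℕ∞) χ ∧ HasCompactSupport χ ∧ (∀ s, 0 ≤ χ s ∧ χ s ≤ 1) ∧
    (∀ s, |deriv χ s| ≤ 2) ∧ (∀ s, |s| ≤ 1 → χ s = 1) ∧ (∀ s, 2 < |s| → χ s = 0)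

/-- The local part `T_1 f(x) = p.v. ∫ Ω(y)|y|^{β-n} χ_β(|y|) f(x-y) dy` of `T_β`. -/
def T1 (n : ℕ) (Om : EuclideanSpace ℝ (Fin n) → ℝ) (χ : ℝ → ℝ) (β : ℝ)
    (f : EuclideanSpace ℝ (Fin n) → ℝ) (x : EuclideanSpace ℝ (Fin n)) : ℝ :=
  limUnder (nhdsWithin (0 : ℝ) (Set.Ioi 0)) fun ε : ℝ =>
    ∫ y in {y : EuclideanSpace ℝ (Fin n) | ε < ‖y‖},
      Om y * ‖y‖ ^ (β - n) * χ (β * ‖y‖) * f (x - y)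

/-- The far part `T_2 f(x) = ∫ Ω(x-y)|x-y|^{β-n} (1-χ_β(|x-y|)) f(y) dy` of `T_β`. -/
def T2 (n : ℕ) (Om : EuclideanSpace ℝ (Fin n) → ℝ) (χ : ℝ → ℝ) (β : ℝ)
    (f : EuclideanSpace ℝ (Fin n) → ℝ) (x : EuclideanSpace ℝ (Fin n)) : ℝ :=
  ∫ y, Om (x - y) * ‖x - y‖ ^ (β - n) * (1 - χ (β * ‖x - y‖)) * f y

/-- The commutator `[b, T_β] f(x) = p.v. ∫ Ω(x-y)|x-y|^{β-n} (b(x)-b(y)) f(y) dy`. -/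
def commTbeta (n : ℕ) (Om : EuclideanSpace ℝ (Fin n) → ℝ) (β : ℝ)
    (b f : EuclideanSpace ℝ (Fin n) → ℝ) (x : EuclideanSpace ℝ (Fin n)) : ℝ :=
  limUnder (nhdsWithin (0 : ℝ) (Set.Ioi 0)) fun ε : ℝ =>
    ∫ y in {y : EuclideanSpace ℝ (Fin n) | ε < ‖x - y‖},
      Om (x - y) * ‖x - y‖ ^ (β - n) * (b x - b y) * f y

/-- The local part `[b, T_β]_1` of the commutator. -/
def commT1 (n : ℕ) (Om : EuclideanSpace ℝ (Fin n) → ℝ) (χ : ℝ → ℝ) (β : ℝ)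
    (b f : EuclideanSpace ℝ (Fin n) → ℝ) (x : EuclideanSpace ℝ (Fin n)) : ℝ :=
  limUnder (nhdsWithin (0 : ℝ) (Set.Ioi 0)) fun ε : ℝ =>
    ∫ y in {y : EuclideanSpace ℝ (Fin n) | ε < ‖x - y‖},
      Om (x - y) * ‖x - y‖ ^ (β - n) * χ (β * ‖x - y‖) * (b x - b y) * f y

/-- The far part `[b, T_β]_2` of the commutator. -/
def commT2 (n : ℕ) (Om : EuclideanSpace ℝ (Fin n) → ℝ) (χ : ℝ → ℝ) (β : ℝ)
    (b f : EuclideanSpace ℝ (Fin n) → ℝ) (x : EuclideanSpace ℝ (Fin n)) : ℝ :=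
  ∫ y, Om (x - y) * ‖x - y‖ ^ (β - n) * (1 - χ (β * ‖x - y‖)) * (b x - b y) * f y

/-- The axis-parallel cube with center `c` and side-length `h`. -/
def cube (n : ℕ) (c : EuclideanSpace ℝ (Fin n)) (h : ℝ) :
    Set (EuclideanSpace ℝ (Fin n)) :=
  {x | ∀ i, |x i - c i| ≤ h / 2}

/-- The BMO seminorm: sup over cubes of the mean oscillation. -/
def bmoNorm (n : ℕ) (b : EuclideanSpace ℝ (Fin n) → ℝ) : ℝ :=
  sSup {t : ℝ | ∃ (c : EuclideanSpace ℝ (Fin n)) (h : ℝ), 0 < h ∧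
    t = ⨍ x in cube n c h, |b x - ⨍ y in cube n c h, b y|}

/-- Membership in BMO: locally integrable with uniformly bounded mean oscillation. -/
def MemBMO (n : ℕ) (b : EuclideanSpace ℝ (Fin n) → ℝ) : Prop :=
  LocallyIntegrable b volume ∧ ∃ M : ℝ, ∀ (c : EuclideanSpace ℝ (Fin n)) (h : ℝ), 0 < h →
    (⨍ x in cube n c h, |b x - ⨍ y in cube n c h, b y|) ≤ M

/-- The Lipschitz (Hölder) seminorm of order `γ`. -/
def lipNorm (n : ℕ) (γ : ℝ) (b : EuclideanSpace ℝ (Fin n) → ℝ) : ℝ :=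
  sSup {t : ℝ | ∃ x y : EuclideanSpace ℝ (Fin n), x ≠ y ∧ t = |b x - b y| / ‖x - y‖ ^ γ}

/-- Membership in the Lipschitz space `Lip_γ`. -/
def MemLipSpace (n : ℕ) (γ : ℝ) (b : EuclideanSpace ℝ (Fin n) → ℝ) : Prop :=
  ∃ L : ℝ, ∀ x y : EuclideanSpace ℝ (Fin n), |b x - b y| ≤ L * ‖x - y‖ ^ γ

/-- The Hardy–Littlewood maximal function (over cubes), `ℝ≥0∞`-valued. -/
def maximalFn (n : ℕ) (g : EuclideanSpace ℝ (Fin n) → ℝ)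
    (x : EuclideanSpace ℝ (Fin n)) : ℝ≥0∞ :=
  ⨆ (c : EuclideanSpace ℝ (Fin n)) (h : ℝ) (_ : 0 < h) (_ : x ∈ cube n c h),
    (volume (cube n c h))⁻¹ * ∫⁻ z in cube n c h, ENNReal.ofReal |g z|

/-- The Fefferman–Stein sharp maximal function (over cubes), `ℝ≥0∞`-valued. -/
def sharpMaximal (n : ℕ) (g : EuclideanSpace ℝ (Fin n) → ℝ)
    (x : EuclideanSpace ℝ (Fin n)) : ℝ≥0∞ :=
  ⨆ (c : EuclideanSpace ℝ (Fin n)) (h : ℝ) (_ : 0 < h) (_ : x ∈ cube n c h),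
    (volume (cube n c h))⁻¹ *
      ∫⁻ z in cube n c h, ENNReal.ofReal |g z - ⨍ w in cube n c h, g w|

/-- The fractional maximal function `[g]^*_{γ,l}`, `ℝ≥0∞`-valued. -/
def fracMaximal (n : ℕ) (γ l : ℝ) (g : EuclideanSpace ℝ (Fin n) → ℝ)
    (x : EuclideanSpace ℝ (Fin n)) : ℝ≥0∞ :=
  ⨆ (c : EuclideanSpace ℝ (Fin n)) (h : ℝ) (_ : 0 < h) (_ : x ∈ cube n c h),
    ((volume (cube n c h) ^ (1 - γ * l / n))⁻¹ *
      ∫⁻ z in cube n c h, ENNReal.ofReal |g z| ^ l) ^ (1 / l)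

/-- `ω` is a Muckenhoupt `A_p` weight. -/
def IsApWeight (n : ℕ) (p : ℝ) (ω : EuclideanSpace ℝ (Fin n) → ℝ) : Prop :=
  (∀ x, 0 ≤ ω x) ∧ LocallyIntegrable ω volume ∧
    ∃ A : ℝ, ∀ (c : EuclideanSpace ℝ (Fin n)) (h : ℝ), 0 < h →
      (⨍ x in cube n c h, ω x) *
        (⨍ x in cube n c h, ω x ^ (-(1 / (p - 1)))) ^ (p - 1) ≤ A

/-- A `(p, l, 0)`-atom: supported in a ball `B`, `‖a‖_{L^l} ≤ |B|^{1/l - 1/p}`, mean zero. -/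
def IsPAtom (n : ℕ) (p l : ℝ) (a : EuclideanSpace ℝ (Fin n) → ℝ) : Prop :=
  ∃ (x₀ : EuclideanSpace ℝ (Fin n)) (r : ℝ), 0 < r ∧
    MemLp a (ENNReal.ofReal l) volume ∧
    (∀ x, x ∉ Metric.closedBall x₀ r → a x = 0) ∧
    eLpNorm a (ENNReal.ofReal l) volume ≤
      ENNReal.ofReal ((volume (Metric.closedBall x₀ r)).toReal ^ (1 / l - 1 / p)) ∧
    (∫ x, a x) = 0

/-- A `(p, l, 0)`-atom supported in a ball centered at the origin. -/
def IsCenteredPAtom (n : ℕ) (p l : ℝ) (a : EuclideanSpace ℝ (Fin n) → ℝ) : Prop :=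
  ∃ r : ℝ, 0 < r ∧
    MemLp a (ENNReal.ofReal l) volume ∧
    (∀ x, x ∉ Metric.closedBall (0 : EuclideanSpace ℝ (Fin n)) r → a x = 0) ∧
    eLpNorm a (ENNReal.ofReal l) volume ≤
      ENNReal.ofReal
        ((volume (Metric.closedBall (0 : EuclideanSpace ℝ (Fin n)) r)).toReal ^ (1 / l - 1 / p)) ∧
    (∫ x, a x) = 0

/-- An atomic decomposition of `f` into `(p,2,0)`-atoms. -/
def HpDecomp (n : ℕ) (p : ℝ) (f : EuclideanSpace ℝ (Fin n) → ℝ)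
    (lam : ℕ → ℝ) (a : ℕ → EuclideanSpace ℝ (Fin n) → ℝ) : Prop :=
  (∀ j, IsPAtom n p 2 (a j)) ∧ Summable (fun j => |lam j| ^ p) ∧
    ∀ᵐ x : EuclideanSpace ℝ (Fin n), HasSum (fun j => lam j * a j x) (f x)

/-- Membership in the Hardy space `H^p`. -/
def MemHp (n : ℕ) (p : ℝ) (f : EuclideanSpace ℝ (Fin n) → ℝ) : Prop :=
  ∃ lam a, HpDecomp n p f lam a

/-- The Hardy space quasinorm `‖f‖_{H^p}`. -/
def hpNorm (n : ℕ) (p : ℝ) (f : EuclideanSpace ℝ (Fin n) → ℝ) : ℝ :=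
  sInf {t : ℝ | ∃ lam a, HpDecomp n p f lam a ∧ t = (∑' j, |lam j| ^ p) ^ (1 / p)}


/-- Auxiliary: `β ^ (-β) ≤ 3` for `β > 0`. -/
lemma aux_rpow_neg_self_le {β : ℝ} (hβ : 0 < β) : β ^ (-β) ≤ 3 := by
  rw [Real.rpow_def_of_pos hβ]
  have h1 : Real.log β⁻¹ ≤ β⁻¹ - 1 :=
    Real.log_le_sub_one_of_pos (by positivity)
  rw [Real.log_inv] at h1
  have h2 : Real.log β * -β ≤ 1 := by
    have hb1 : -Real.log β ≤ β⁻¹ - 1 := h1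
    have : β * (-Real.log β) ≤ β * (β⁻¹ - 1) := by
      exact mul_le_mul_of_nonneg_left hb1 hβ.le
    have hβi : β * β⁻¹ = 1 := mul_inv_cancel₀ hβ.ne'
    nlinarith
  calc Real.exp (Real.log β * -β) ≤ Real.exp 1 := Real.exp_le_exp.mpr h2
    _ ≤ 3 := by
        have := Real.exp_one_lt_d9
        norm_num at this ⊢
        linarith

/-- Auxiliary polar-coordinates formula for lower integrals of radial functions. -/
lemma aux_lintegral_polar {n : ℕ} (hn : 0 < n) (g : ℝ → ℝ≥0∞) (hg : Measurable g) :
    ∫⁻ x : EuclideanSpace ℝ (Fin n), g ‖x‖ =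
      (volume : Measure (EuclideanSpace ℝ (Fin n))).toSphere Set.univ *
        ∫⁻ r in Set.Ioi (0:ℝ), ENNReal.ofReal (r ^ (n - 1)) * g r := by
  haveI : Nonempty (Fin n) := Fin.pos_iff_nonempty.mp hn
  haveI : Nontrivial (EuclideanSpace ℝ (Fin n)) := inferInstance
  set E := EuclideanSpace ℝ (Fin n) with hE
  set μ : Measure E := volume with hμ
  have hdim : Module.finrank ℝ E = n := finrank_euclideanSpace_fin
  have h1 : ∫⁻ x : E, g ‖x‖ ∂μ = ∫⁻ x : ({0}ᶜ : Set E), g ‖(x : E)‖ ∂(μ.comap Subtype.val) := by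
    rw [lintegral_subtype_comap (measurableSet_singleton (0:E)).compl
      (fun x : E => g ‖x‖), MeasureTheory.restrict_compl_singleton]
  have hmeas2 : Measurable (fun p : Metric.sphere (0:E) 1 × Set.Ioi (0:ℝ) => g p.2) :=
    hg.comp (measurable_subtype_coe.comp measurable_snd)
  have h2 : ∫⁻ x : ({0}ᶜ : Set E), g ‖(x : E)‖ ∂(μ.comap Subtype.val) =
      ∫⁻ p : Metric.sphere (0:E) 1 × Set.Ioi (0:ℝ), g p.2
        ∂(μ.toSphere.prod (.volumeIoiPow (Module.finrank ℝ E - 1))) := by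
    rw [← (μ.measurePreserving_homeomorphUnitSphereProd).lintegral_comp hmeas2]
    exact lintegral_congr fun x => by simp
  have h3 : ∫⁻ p : Metric.sphere (0:E) 1 × Set.Ioi (0:ℝ), g p.2
        ∂(μ.toSphere.prod (.volumeIoiPow (n - 1))) =
      μ.toSphere Set.univ * ∫⁻ r : Set.Ioi (0:ℝ), g r ∂(.volumeIoiPow (n - 1)) := by
    rw [lintegral_prod (fun p : Metric.sphere (0:E) 1 × Set.Ioi (0:ℝ) => g p.2)
      hmeas2.aemeasurable]
    simp [lintegral_const, mul_comm]
  have h4 : ∫⁻ r : Set.Ioi (0:ℝ), g r ∂(Measure.volumeIoiPow (n - 1)) =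
      ∫⁻ r in Set.Ioi (0:ℝ), ENNReal.ofReal (r ^ (n - 1)) * g r := by
    have hgs : Measurable (fun r : Set.Ioi (0:ℝ) => g ↑r) := hg.comp measurable_subtype_coe
    rw [Measure.volumeIoiPow, lintegral_withDensity_eq_lintegral_mul _
      ((measurable_subtype_coe.pow_const _).ennreal_ofReal) hgs]
    rw [← lintegral_subtype_comap measurableSet_Ioi
      (fun r : ℝ => ENNReal.ofReal (r ^ (n-1)) * g r)]
    rfl
  rw [h1, h2, hdim, h3, h4]

set_option maxHeartbeats 1000000 in
/-- Lemma: `(L^1, L^q)` estimate for the far part `T_2` of `T_β`. -/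
theorem far_part_L1_Lq_estimate
    (n : ℕ) (hn : 0 < n) (Om : EuclideanSpace ℝ (Fin n) → ℝ)
    (hhom : HomogZero n Om) (hbd : BoundedOnSphere n Om)
    (χ : ℝ → ℝ) (hχ : IsCutoff χ) (q : ℝ) (hq : 1 < q) :
    ∃ C : ℝ, 0 < C ∧ ∀ (β : ℝ) (f : EuclideanSpace ℝ (Fin n) → ℝ),
      0 < β → β < (q - 1) * n / q → Integrable f volume →
      eLpNorm (T2 n Om χ β f) (ENNReal.ofReal q) volume ≤
        ENNReal.ofReal (C * sphereSupNorm n Om *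
            (β ^ ((q - 1) * n / q) / (n * (q - 1) - β * q) ^ (1 / q))) *
          eLpNorm f 1 volume := by
  classical
  have hq0 : (0:ℝ) < q := lt_trans one_pos hq
  have hqne : q ≠ 0 := hq0.ne'
  haveI : Nonempty (Fin n) := Fin.pos_iff_nonempty.mp hn
  haveI : Nontrivial (EuclideanSpace ℝ (Fin n)) := inferInstance
  set M := sphereSupNorm n Om with hMdef
  obtain ⟨M₀, hM₀⟩ := hbd
  obtain ⟨u, hu⟩ : ∃ u : EuclideanSpace ℝ (Fin n), ‖u‖ = 1 := by
    obtain ⟨u, hu⟩ := (NormedSpace.sphere_nonempty (E := EuclideanSpace ℝ (Fin n)) (x := 0) (r := 1)).mpr (by norm_num : (0:ℝ) ≤ 1)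
    exact ⟨u, mem_sphere_zero_iff_norm.mp hu⟩
  have hbdd : BddAbove {t : ℝ | ∃ x : EuclideanSpace ℝ (Fin n), ‖x‖ = 1 ∧ t = |Om x|} :=
    ⟨M₀, by rintro t ⟨x, hx, rfl⟩; exact hM₀ x hx⟩
  have hMle : ∀ x : EuclideanSpace ℝ (Fin n), ‖x‖ = 1 → |Om x| ≤ M := fun x hx => le_csSup hbdd ⟨x, hx, rfl⟩
  have hM0 : 0 ≤ M := (abs_nonneg _).trans (hMle u hu)
  have hOmb : ∀ z : EuclideanSpace ℝ (Fin n), z ≠ 0 → |Om z| ≤ M := by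
    intro z hz
    have hzn : (0:ℝ) < ‖z‖ := norm_pos_iff.mpr hz
    have h1 : ‖(‖z‖⁻¹ • z : EuclideanSpace ℝ (Fin n))‖ = 1 := by
      rw [norm_smul, norm_inv, norm_norm, inv_mul_cancel₀ hzn.ne']
    have h2 := hhom ‖z‖ hzn (‖z‖⁻¹ • z) (smul_ne_zero (inv_ne_zero hzn.ne') hz)
    rw [smul_inv_smul₀ hzn.ne'] at h2
    rw [h2]; exact hMle _ h1
  set S := (volume : Measure (EuclideanSpace ℝ (Fin n))).toSphere Set.univ with hSdef
  have hS_ne : S ≠ ∞ := measure_ne_top _ _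
  refine ⟨3 * S.toReal ^ (1/q) + 1, by positivity, ?_⟩
  intro β f hβ hβq hf
  set q' := Real.conjExponent q with hq'def
  have hpq : q.HolderConjugate q' := Real.HolderConjugate.conjExponent hq
  have hq'0 : (0:ℝ) < q' := hpq.symm.pos
  set D := (n:ℝ) * (q - 1) - β * q with hDdef
  have hβqn : β * q < (q - 1) * n := (lt_div_iff₀ hq0).mp hβq
  have hD0 : (0:ℝ) < D := by rw [hDdef]; nlinarith
  -- measurable representative of f
  have hfm := hf.1
  set φ := hfm.mk f with hφdef
  have hφm : StronglyMeasurable φ := hfm.stronglyMeasurable_mk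
  have hfφ : f =ᵐ[(volume : Measure (EuclideanSpace ℝ (Fin n)))] φ := hfm.ae_eq_mk
  set F : EuclideanSpace ℝ (Fin n) → ℝ≥0∞ := fun y => (‖φ y‖₊ : ℝ≥0∞) with hFdef
  have hF : Measurable F := hφm.measurable.nnnorm.coe_nnreal_ennreal
  set A := ∫⁻ y, F y ∂(volume : Measure (EuclideanSpace ℝ (Fin n))) with hAdef
  have hAf : ∫⁻ y, (‖f y‖₊ : ℝ≥0∞) ∂(volume : Measure (EuclideanSpace ℝ (Fin n))) = A :=
    lintegral_congr_ae (hfφ.mono fun y hy => by rw [hFdef]; simp [hy])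
  have hA1 : eLpNorm f 1 (volume : Measure (EuclideanSpace ℝ (Fin n))) = A := by
    rw [eLpNorm_one_eq_lintegral_enorm]; exact hAf
  have hA_top : A ≠ ∞ := by
    rw [← hAf]; exact hf.2.ne
  -- the majorizing kernel
  set g₀ : ℝ → ℝ≥0∞ :=
    fun r => Set.indicator (Set.Ici (1/β)) (fun r => ENNReal.ofReal r ^ (β - (n:ℝ))) r with hg₀def
  have hg₀m : Measurable g₀ :=
    (ENNReal.continuous_rpow_const.measurable.comp measurable_id.ennreal_ofReal).indicator
      measurableSet_Ici
  set k' : EuclideanSpace ℝ (Fin n) → ℝ≥0∞ := fun z => g₀ ‖z‖ with hk'def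
  have hk'm : Measurable k' := hg₀m.comp measurable_norm
  set c := ENNReal.ofReal M with hcdef
  -- pointwise bound on the integrand
  have hpt : ∀ x y : EuclideanSpace ℝ (Fin n),
      (‖Om (x-y) * ‖x-y‖ ^ (β - (n:ℝ)) * (1 - χ (β * ‖x-y‖)) * f y‖₊ : ℝ≥0∞) ≤
        (c * k' (x-y)) * (‖f y‖₊ : ℝ≥0∞) := by
    intro x y
    set z := x - y with hzdef
    by_cases hcase : β * ‖z‖ ≤ 1
    · have hone : χ (β * ‖z‖) = 1 :=
        hχ.2.2.2.2.1 _ (by rw [abs_of_nonneg (by positivity)]; exact hcase)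
      rw [hone]
      simp
    · push_neg at hcase
      have hz0 : z ≠ 0 := by
        intro h0; rw [h0, norm_zero, mul_zero] at hcase; linarith
      have hzn : (0:ℝ) < ‖z‖ := norm_pos_iff.mpr hz0
      have hmem : ‖z‖ ∈ Set.Ici (1/β) := by
        rw [Set.mem_Ici, div_le_iff₀ hβ, mul_comm]; exact hcase.le
      have hk : k' z = ENNReal.ofReal (‖z‖ ^ (β - (n:ℝ))) := by
        rw [hk'def]; simp only [hg₀def, Set.indicator_of_mem hmem]
        rw [ENNReal.ofReal_rpow_of_pos hzn]
      have h2 : |1 - χ (β*‖z‖)| ≤ 1 := by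
        have h := hχ.2.2.1 (β*‖z‖)
        rw [abs_le]; constructor <;> linarith [h.1, h.2]
      have habs : |Om z * ‖z‖ ^ (β - (n:ℝ)) * (1 - χ (β * ‖z‖))| ≤ M * ‖z‖ ^ (β - (n:ℝ)) := by
        rw [abs_mul, abs_mul, abs_of_nonneg (Real.rpow_nonneg (norm_nonneg z) _)]
        have h1 := hOmb z hz0
        have h3 : (0:ℝ) ≤ ‖z‖ ^ (β - (n:ℝ)) := Real.rpow_nonneg (norm_nonneg z) _
        calc |Om z| * ‖z‖ ^ (β - (n:ℝ)) * |1 - χ (β * ‖z‖)|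
            = (|Om z| * |1 - χ (β * ‖z‖)|) * ‖z‖ ^ (β - (n:ℝ)) := by ring
          _ ≤ (M * 1) * ‖z‖ ^ (β - (n:ℝ)) :=
              mul_le_mul_of_nonneg_right (mul_le_mul h1 h2 (abs_nonneg _) hM0) h3
          _ = M * ‖z‖ ^ (β - (n:ℝ)) := by ring
      calc (‖Om z * ‖z‖ ^ (β - (n:ℝ)) * (1 - χ (β * ‖z‖)) * f y‖₊ : ℝ≥0∞)
          = (‖Om z * ‖z‖ ^ (β - (n:ℝ)) * (1 - χ (β * ‖z‖))‖₊ : ℝ≥0∞) * (‖f y‖₊ : ℝ≥0∞) := by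
            rw [nnnorm_mul]; push_cast; ring
        _ ≤ ENNReal.ofReal (M * ‖z‖ ^ (β - (n:ℝ))) * (‖f y‖₊ : ℝ≥0∞) := by
            gcongr
            rw [← enorm_eq_nnnorm, ← ofReal_norm]
            exact ENNReal.ofReal_le_ofReal (by rw [Real.norm_eq_abs]; exact habs)
        _ = (c * k' z) * (‖f y‖₊ : ℝ≥0∞) := by
            rw [ENNReal.ofReal_mul hM0, hk, hcdef]
  -- Step A : pointwise bound on T2
  have hptA : ∀ x : EuclideanSpace ℝ (Fin n), (‖T2 n Om χ β f x‖₊ : ℝ≥0∞) ≤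
      ∫⁻ y, (c * k' (x - y)) * F y ∂(volume : Measure (EuclideanSpace ℝ (Fin n))) := by
    intro x
    calc (‖T2 n Om χ β f x‖₊ : ℝ≥0∞)
        ≤ ∫⁻ y, (‖Om (x-y) * ‖x-y‖ ^ (β - (n:ℝ)) * (1 - χ (β * ‖x-y‖)) * f y‖₊ : ℝ≥0∞)
            ∂(volume : Measure (EuclideanSpace ℝ (Fin n))) := enorm_integral_le_lintegral_enorm _
      _ ≤ ∫⁻ y, (c * k' (x-y)) * (‖f y‖₊ : ℝ≥0∞) ∂(volume : Measure (EuclideanSpace ℝ (Fin n))) :=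
          lintegral_mono fun y => hpt x y
      _ = ∫⁻ y, (c * k' (x-y)) * F y ∂(volume : Measure (EuclideanSpace ℝ (Fin n))) :=
          lintegral_congr_ae (hfφ.mono fun y hy => by rw [hFdef]; simp [hy])
  -- Step B : Hoelder's inequality
  have hkx : ∀ x : EuclideanSpace ℝ (Fin n), Measurable (fun y : EuclideanSpace ℝ (Fin n) => c * k' (x - y)) := fun x =>
    measurable_const.mul (hk'm.comp (measurable_const.sub measurable_id))
  have hH : ∀ x : EuclideanSpace ℝ (Fin n), (∫⁻ y, (c * k' (x - y)) * F y ∂(volume : Measure (EuclideanSpace ℝ (Fin n)))) ≤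
      (∫⁻ y, (c * k' (x-y))^q * F y ∂(volume : Measure (EuclideanSpace ℝ (Fin n)))) ^ (1/q) * A ^ (1/q') := by
    intro x
    have ha : AEMeasurable (fun y : EuclideanSpace ℝ (Fin n) => (c * k' (x - y)) * F y ^ (1/q))
        (volume : Measure (EuclideanSpace ℝ (Fin n))) :=
      ((hkx x).mul (ENNReal.continuous_rpow_const.measurable.comp hF)).aemeasurable
    have hb : AEMeasurable (fun y : EuclideanSpace ℝ (Fin n) => F y ^ (1/q')) (volume : Measure (EuclideanSpace ℝ (Fin n))) :=
      (ENNReal.continuous_rpow_const.measurable.comp hF).aemeasurable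
    have key := ENNReal.lintegral_mul_le_Lp_mul_Lq (volume : Measure (EuclideanSpace ℝ (Fin n))) hpq ha hb
    have hsum : 1/q + 1/q' = 1 := by
      rw [one_div, one_div]; exact hpq.inv_add_inv_eq_one
    have h1 : ∀ y : EuclideanSpace ℝ (Fin n), (c * k' (x-y)) * F y =
        ((c * k' (x-y)) * F y ^ (1/q)) * F y ^ (1/q') := by
      intro y
      conv_rhs => rw [mul_assoc, ← ENNReal.rpow_add_of_nonneg _ _ (by positivity) (by positivity),
        hsum, ENNReal.rpow_one]
    have h2 : ∀ y : EuclideanSpace ℝ (Fin n), ((c * k' (x-y)) * F y ^ (1/q))^q = (c * k' (x-y))^q * F y := by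
      intro y
      rw [ENNReal.mul_rpow_of_nonneg _ _ hq0.le, ← ENNReal.rpow_mul,
        one_div_mul_cancel hqne, ENNReal.rpow_one]
    have h3 : ∀ y : EuclideanSpace ℝ (Fin n), (F y ^ (1/q'))^q' = F y := by
      intro y
      rw [← ENNReal.rpow_mul, one_div_mul_cancel hq'0.ne', ENNReal.rpow_one]
    calc ∫⁻ y, (c * k' (x-y)) * F y ∂(volume : Measure (EuclideanSpace ℝ (Fin n)))
        = ∫⁻ y, ((c * k' (x-y)) * F y ^ (1/q)) * F y ^ (1/q') ∂(volume : Measure (EuclideanSpace ℝ (Fin n))) :=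
          lintegral_congr h1
      _ ≤ (∫⁻ y, ((c * k' (x-y)) * F y ^ (1/q))^q ∂(volume : Measure (EuclideanSpace ℝ (Fin n)))) ^ (1/q) *
            (∫⁻ y, (F y ^ (1/q'))^q' ∂(volume : Measure (EuclideanSpace ℝ (Fin n)))) ^ (1/q') := key
      _ = (∫⁻ y, (c * k' (x-y))^q * F y ∂(volume : Measure (EuclideanSpace ℝ (Fin n)))) ^ (1/q) * A ^ (1/q') := by
          rw [lintegral_congr h2, lintegral_congr h3]
  -- Step C : power q and integrate
  have hq'q : 1/q' * q = q - 1 := by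
    have : q' = q / (q - 1) := hq'def
    rw [this]
    field_simp
  set G : EuclideanSpace ℝ (Fin n) → ℝ≥0∞ := fun z => (c * k' z)^q with hGdef
  have hGm : Measurable G :=
    ENNReal.continuous_rpow_const.measurable.comp (measurable_const.mul hk'm)
  set B := ∫⁻ z, G z ∂(volume : Measure (EuclideanSpace ℝ (Fin n))) with hBdef
  have hqq1 : ∀ x : EuclideanSpace ℝ (Fin n), (‖T2 n Om χ β f x‖₊ : ℝ≥0∞)^q ≤
      (∫⁻ y, G (x-y) * F y ∂(volume : Measure (EuclideanSpace ℝ (Fin n)))) * A^(q-1) := by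
    intro x
    calc (‖T2 n Om χ β f x‖₊ : ℝ≥0∞)^q
        ≤ ((∫⁻ y, (c * k' (x-y))^q * F y ∂(volume : Measure (EuclideanSpace ℝ (Fin n)))) ^ (1/q) * A ^ (1/q'))^q :=
          ENNReal.rpow_le_rpow ((hptA x).trans (hH x)) hq0.le
      _ = (∫⁻ y, G (x-y) * F y ∂(volume : Measure (EuclideanSpace ℝ (Fin n)))) * A^(q-1) := by
          rw [ENNReal.mul_rpow_of_nonneg _ _ hq0.le, ← ENNReal.rpow_mul, ← ENNReal.rpow_mul,
            one_div_mul_cancel hqne, ENNReal.rpow_one, hq'q]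
  have hmain : (∫⁻ x, (‖T2 n Om χ β f x‖₊ : ℝ≥0∞)^q ∂(volume : Measure (EuclideanSpace ℝ (Fin n)))) ≤ B * A^q := by
    have hAq1 : A^(q-1) ≠ ∞ := ENNReal.rpow_ne_top_of_nonneg (by linarith) hA_top
    have hswap : AEMeasurable (fun p : EuclideanSpace ℝ (Fin n) × EuclideanSpace ℝ (Fin n) => G (p.1 - p.2) * F p.2)
        ((volume : Measure (EuclideanSpace ℝ (Fin n))).prod (volume : Measure (EuclideanSpace ℝ (Fin n)))) :=
      ((hGm.comp (measurable_fst.sub measurable_snd)).mul (hF.comp measurable_snd)).aemeasurable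
    calc ∫⁻ x, (‖T2 n Om χ β f x‖₊ : ℝ≥0∞)^q ∂(volume : Measure (EuclideanSpace ℝ (Fin n)))
        ≤ ∫⁻ x, (∫⁻ y, G (x-y) * F y ∂(volume : Measure (EuclideanSpace ℝ (Fin n)))) * A^(q-1)
            ∂(volume : Measure (EuclideanSpace ℝ (Fin n))) := lintegral_mono hqq1
      _ = (∫⁻ x, ∫⁻ y, G (x-y) * F y ∂(volume : Measure (EuclideanSpace ℝ (Fin n))) ∂(volume : Measure (EuclideanSpace ℝ (Fin n)))) * A^(q-1) :=
          lintegral_mul_const' _ _ hAq1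
      _ = (∫⁻ y, ∫⁻ x, G (x-y) * F y ∂(volume : Measure (EuclideanSpace ℝ (Fin n))) ∂(volume : Measure (EuclideanSpace ℝ (Fin n)))) * A^(q-1) := by
          rw [lintegral_lintegral_swap hswap]
      _ = (∫⁻ y, B * F y ∂(volume : Measure (EuclideanSpace ℝ (Fin n)))) * A^(q-1) := by
          congr 1
          refine lintegral_congr fun y => ?_
          rw [lintegral_mul_const' (F y) _ ENNReal.coe_ne_top,
            lintegral_sub_right_eq_self G y, mul_comm]
      _ = B * A * A^(q-1) := by rw [lintegral_const_mul B hF]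
      _ = B * A^q := by
          rw [mul_assoc]
          congr 1
          have h5 : A * A^(q-1) = A^(1:ℝ) * A^(q-1) := by rw [ENNReal.rpow_one]
          rw [h5, ← ENNReal.rpow_add_of_nonneg _ _ zero_le_one (by linarith)]
          norm_num
  -- Step D : compute B
  set t := ((n:ℝ) - 1) + (β - n)*q with htdef
  have ht : t < -1 := by rw [htdef]; nlinarith
  have hb1 : (0:ℝ) < 1/β := by positivity
  have hBeq : B = c^q * (S * ENNReal.ofReal (β ^ D / D)) := by
    have hkq : ∀ z : EuclideanSpace ℝ (Fin n), (c * k' z)^q = c^q * Set.indicator (Set.Ici (1/β))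
        (fun r => ENNReal.ofReal r ^ ((β - (n:ℝ))*q)) ‖z‖ := by
      intro z
      rw [ENNReal.mul_rpow_of_nonneg _ _ hq0.le]
      congr 1
      rw [hk'def]
      by_cases hmem : ‖z‖ ∈ Set.Ici (1/β)
      · simp only [hg₀def, Set.indicator_of_mem hmem]
        rw [ENNReal.rpow_mul]
      · simp only [hg₀def, Set.indicator_of_notMem hmem]
        rw [ENNReal.zero_rpow_of_pos hq0]
    have hg₁m : Measurable (fun r : ℝ => Set.indicator (Set.Ici (1/β))
        (fun r => ENNReal.ofReal r ^ ((β - (n:ℝ))*q)) r) :=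
      (ENNReal.continuous_rpow_const.measurable.comp measurable_id.ennreal_ofReal).indicator
        measurableSet_Ici
    calc B = ∫⁻ z, c^q * Set.indicator (Set.Ici (1/β))
          (fun r => ENNReal.ofReal r ^ ((β - (n:ℝ))*q)) ‖z‖ ∂(volume : Measure (EuclideanSpace ℝ (Fin n))) :=
        lintegral_congr hkq
      _ = c^q * ∫⁻ z, Set.indicator (Set.Ici (1/β))
          (fun r => ENNReal.ofReal r ^ ((β - (n:ℝ))*q)) ‖z‖ ∂(volume : Measure (EuclideanSpace ℝ (Fin n))) :=
        lintegral_const_mul _ (hg₁m.comp measurable_norm)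
      _ = c^q * (S * ENNReal.ofReal (β ^ D / D)) := by
        congr 1
        rw [aux_lintegral_polar hn _ hg₁m]
        congr 1
        have hIsub : Set.Ici (1/β) ⊆ Set.Ioi (0:ℝ) := fun r hr => lt_of_lt_of_le hb1 hr
        have hcongr : ∀ r ∈ Set.Ioi (0:ℝ),
            ENNReal.ofReal (r ^ (n - 1)) * Set.indicator (Set.Ici (1/β))
              (fun r => ENNReal.ofReal r ^ ((β - (n:ℝ))*q)) r =
            Set.indicator (Set.Ici (1/β)) (fun r => ENNReal.ofReal (r ^ t)) r := by
          intro r hr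
          by_cases hmem : r ∈ Set.Ici (1/β)
          · have hr0 : (0:ℝ) < r := hr
            rw [Set.indicator_of_mem hmem, Set.indicator_of_mem hmem,
              ENNReal.ofReal_rpow_of_pos hr0, ← ENNReal.ofReal_mul (by positivity)]
            congr 1
            rw [htdef, Real.rpow_add hr0, ← Real.rpow_natCast r (n-1)]
            congr 2
            push_cast [Nat.cast_sub hn]
            ring
          · rw [Set.indicator_of_notMem hmem, Set.indicator_of_notMem hmem, mul_zero]
        rw [setLIntegral_congr_fun measurableSet_Ioi hcongr]
        rw [lintegral_indicator measurableSet_Ici,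
          Measure.restrict_restrict measurableSet_Ici,
          Set.inter_eq_left.mpr hIsub,
          ← Measure.restrict_congr_set Ioi_ae_eq_Ici]
        have hint : IntegrableOn (fun r : ℝ => r ^ t) (Set.Ioi (1/β)) volume :=
          integrableOn_Ioi_rpow_of_lt ht hb1
        rw [← ofReal_integral_eq_lintegral_ofReal hint
          ((ae_restrict_mem measurableSet_Ioi).mono fun r hr =>
            Real.rpow_nonneg (le_of_lt (lt_trans hb1 hr)) t)]
        congr 1
        rw [integral_Ioi_rpow_of_lt ht hb1]
        have ht1 : t + 1 = -D := by rw [htdef, hDdef]; ring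
        rw [ht1]
        rw [one_div, Real.inv_rpow hβ.le, ← Real.rpow_neg hβ.le, neg_neg]
        field_simp
  -- Step EuclideanSpace ℝ (Fin n) : conclude
  have hT : eLpNorm (T2 n Om χ β f) (ENNReal.ofReal q) (volume : Measure (EuclideanSpace ℝ (Fin n))) ≤ B^(1/q) * A := by
    rw [eLpNorm_eq_lintegral_rpow_enorm_toReal (ENNReal.ofReal_pos.mpr hq0).ne'
      ENNReal.ofReal_ne_top, ENNReal.toReal_ofReal hq0.le]
    calc (∫⁻ x, (‖T2 n Om χ β f x‖₊ : ℝ≥0∞)^q ∂(volume : Measure (EuclideanSpace ℝ (Fin n))))^(1/q)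
        ≤ (B * A^q)^(1/q) := ENNReal.rpow_le_rpow hmain (by positivity)
      _ = B^(1/q) * A := by
          rw [ENNReal.mul_rpow_of_nonneg _ _ (by positivity), ← ENNReal.rpow_mul,
            mul_one_div_cancel hqne, ENNReal.rpow_one]
  have hconst : B^(1/q) ≤
      ENNReal.ofReal ((3 * S.toReal ^ (1/q) + 1) * M *
        (β ^ ((q - 1) * n / q) / D ^ (1 / q))) := by
    rw [hBeq]
    have hV0 : (0:ℝ) ≤ β ^ D / D := by positivity
    have hrw : c^q * (S * ENNReal.ofReal (β ^ D / D)) =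
        ENNReal.ofReal (M^q * (S.toReal * (β ^ D / D))) := by
      rw [ENNReal.ofReal_mul (by positivity), ENNReal.ofReal_mul ENNReal.toReal_nonneg,
        hcdef, ENNReal.ofReal_rpow_of_nonneg hM0 hq0.le, ENNReal.ofReal_toReal hS_ne]
    rw [hrw, ENNReal.ofReal_rpow_of_nonneg (by positivity) (by positivity)]
    apply ENNReal.ofReal_le_ofReal
    have hSt : (0:ℝ) ≤ S.toReal := ENNReal.toReal_nonneg
    have hMq : (M^q * (S.toReal * (β ^ D / D)))^(1/q) =
        M * (S.toReal^(1/q) * (β ^ D / D)^(1/q)) := by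
      rw [Real.mul_rpow (by positivity) (by positivity),
        Real.mul_rpow hSt hV0, ← Real.rpow_mul hM0, mul_one_div_cancel hqne, Real.rpow_one]
    rw [hMq]
    have hVle : (β ^ D / D)^(1/q) ≤ 3 * (β ^ ((q - 1) * n / q) / D^(1/q)) := by
      rw [Real.div_rpow (by positivity) hD0.le, ← Real.rpow_mul hβ.le]
      have hDq : D * (1/q) = (q - 1) * n / q + (-β) := by
        rw [hDdef]; field_simp; ring
      rw [hDq, Real.rpow_add hβ]
      have h3 := aux_rpow_neg_self_le hβ
      have hβe' : (0:ℝ) ≤ β ^ ((q - 1) * n / q) := Real.rpow_nonneg hβ.le _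
      calc β ^ ((q - 1) * n / q) * β ^ (-β) / D^(1/q)
          ≤ β ^ ((q - 1) * n / q) * 3 / D^(1/q) :=
            (div_le_div_iff_of_pos_right (Real.rpow_pos_of_pos hD0 _)).mpr
              (mul_le_mul_of_nonneg_left h3 hβe')
        _ = 3 * (β ^ ((q - 1) * n / q) / D^(1/q)) := by ring
    have hD1q : (0:ℝ) < D^(1/q) := Real.rpow_pos_of_pos hD0 _
    have hβe : (0:ℝ) ≤ β ^ ((q - 1) * n / q) := Real.rpow_nonneg hβ.le _
    have hSt1q : (0:ℝ) ≤ S.toReal^(1/q) := Real.rpow_nonneg hSt _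
    calc M * (S.toReal^(1/q) * (β ^ D / D)^(1/q))
        ≤ M * (S.toReal^(1/q) * (3 * (β ^ ((q - 1) * n / q) / D^(1/q)))) :=
          mul_le_mul_of_nonneg_left (mul_le_mul_of_nonneg_left hVle hSt1q) hM0
      _ ≤ (3 * S.toReal ^ (1/q) + 1) * M * (β ^ ((q - 1) * n / q) / D ^ (1 / q)) := by
          nlinarith [mul_nonneg hM0 (div_nonneg hβe hD1q.le)]
  calc eLpNorm (T2 n Om χ β f) (ENNReal.ofReal q) (volume : Measure (EuclideanSpace ℝ (Fin n)))
      ≤ B^(1/q) * A := hT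
    _ ≤ ENNReal.ofReal ((3 * S.toReal ^ (1/q) + 1) * M *
          (β ^ ((q - 1) * n / q) / D ^ (1 / q))) * A := mul_le_mul_left hconst _
    _ = _ := by rw [hA1]
end
end

section
/- Let Ω : ℝ^n \ {0} → ℝ be homogeneous of degree 0 and bounded on S^{n−1}. There exists a constant C > 0 (depending only on n) such that for all 0 < β < n, all r > 0, and all v, w ∈ ℝ^n with |v| ≤ r and |w| ≥ 2r, one has | Ω(w−v)|w−v|^{β−n} χ_β(|w−v|) − Ω(w)|w|^{β−n} χ_β(|w|) | ≤ C ( |v| · |w|^{−(n+1)} · ‖Ω‖_{L^∞(S^{n−1})} + |w|^{−n} · ω_∞( 2|v|/|w| ) ). -/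
open MeasureTheory Filter Metric Set ENNReal NNReal

noncomputable section

lemma rpow_le_exp_eight {β t : ℝ} (hβ : 0 < β) (ht : 0 < t) (h : β * t ≤ 8) :
    t ^ β ≤ Real.exp 8 := by
  rcases le_or_gt t 1 with h1 | h1
  · exact le_trans (Real.rpow_le_one ht.le h1 hβ.le) (Real.one_le_exp (by norm_num))
  · rw [Real.rpow_def_of_pos ht]
    apply Real.exp_le_exp.mpr
    have hl := Real.log_le_sub_one_of_pos ht
    nlinarith [Real.log_nonneg h1.le]

lemma abs_rpow_sub_rpow_le {p a b c C : ℝ} (hc : 0 < c) (ha : c ≤ a) (hb : c ≤ b)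
    (hC : ∀ x : ℝ, c ≤ x → x ≤ max a b → |p| * x ^ (p - 1) ≤ C) :
    |a ^ p - b ^ p| ≤ C * |a - b| := by
  have key := Convex.norm_image_sub_le_of_norm_hasDerivWithin_le
    (f := fun x : ℝ => x ^ p) (f' := fun x : ℝ => p * x ^ (p - 1))
    (s := Set.Icc c (max a b)) (C := C)
    (fun x hx => (Real.hasDerivAt_rpow_const
      (Or.inl (ne_of_gt (lt_of_lt_of_le hc hx.1)))).hasDerivWithinAt)
    (fun x hx => by
      rw [Real.norm_eq_abs, abs_mul,
        abs_of_nonneg (Real.rpow_nonneg (le_of_lt (lt_of_lt_of_le hc hx.1)) _)]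
      exact hC x hx.1 hx.2)
    (convex_Icc _ _) (Set.mem_Icc.mpr ⟨hb, le_max_right a b⟩)
    (Set.mem_Icc.mpr ⟨ha, le_max_left a b⟩)
  simpa [Real.norm_eq_abs] using key

lemma unit_diff_le {n : ℕ} (x y : EuclideanSpace ℝ (Fin n)) (hx : x ≠ 0) (hy : y ≠ 0) :
    ‖‖x‖⁻¹ • x - ‖y‖⁻¹ • y‖ ≤ 2 * ‖x - y‖ / ‖y‖ := by
  have hxn : (0:ℝ) < ‖x‖ := norm_pos_iff.mpr hx
  have hyn : (0:ℝ) < ‖y‖ := norm_pos_iff.mpr hy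
  have heq : ‖x‖⁻¹ • x - ‖y‖⁻¹ • y = ‖y‖⁻¹ • (x - y) + (‖x‖⁻¹ - ‖y‖⁻¹) • x := by
    rw [smul_sub, sub_smul]; abel
  rw [heq]
  have h1 : ‖‖y‖⁻¹ • (x - y)‖ = ‖x - y‖ / ‖y‖ := by
    rw [norm_smul, Real.norm_eq_abs, abs_of_pos (inv_pos.mpr hyn)]
    rw [inv_mul_eq_div]
  have h2 : ‖(‖x‖⁻¹ - ‖y‖⁻¹) • x‖ ≤ ‖x - y‖ / ‖y‖ := by
    rw [norm_smul, Real.norm_eq_abs]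
    have he : |‖x‖⁻¹ - ‖y‖⁻¹| = |‖y‖ - ‖x‖| / (‖x‖ * ‖y‖) := by
      rw [inv_sub_inv hxn.ne' hyn.ne', abs_div, abs_mul, abs_of_pos hxn, abs_of_pos hyn]
    rw [he]
    have h3 : |‖y‖ - ‖x‖| ≤ ‖x - y‖ := by
      rw [abs_sub_comm]; exact abs_norm_sub_norm_le x y
    calc |‖y‖ - ‖x‖| / (‖x‖ * ‖y‖) * ‖x‖ = |‖y‖ - ‖x‖| / ‖y‖ := by
          field_simp
      _ ≤ ‖x - y‖ / ‖y‖ := by gcongr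
  calc ‖‖y‖⁻¹ • (x - y) + (‖x‖⁻¹ - ‖y‖⁻¹) • x‖
      ≤ ‖‖y‖⁻¹ • (x - y)‖ + ‖(‖x‖⁻¹ - ‖y‖⁻¹) • x‖ := norm_add_le _ _
    _ ≤ ‖x - y‖ / ‖y‖ + ‖x - y‖ / ‖y‖ := by rw [h1]; gcongr
    _ = 2 * ‖x - y‖ / ‖y‖ := by ring

set_option maxHeartbeats 1000000 in
/-- Lemma: pointwise kernel difference estimate for the truncated kernel of `T_1`. -/
theorem kernel_difference_estimate
    (n : ℕ) (hn : 0 < n) (χ : ℝ → ℝ) (hχ : IsCutoff χ) :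
    ∃ C : ℝ, 0 < C ∧ ∀ Om : EuclideanSpace ℝ (Fin n) → ℝ,
      HomogZero n Om → BoundedOnSphere n Om →
      ∀ (β r : ℝ) (v w : EuclideanSpace ℝ (Fin n)),
        0 < β → β < n → 0 < r → ‖v‖ ≤ r → 2 * r ≤ ‖w‖ →
        |Om (w - v) * ‖w - v‖ ^ (β - n) * χ (β * ‖w - v‖) -
            Om w * ‖w‖ ^ (β - n) * χ (β * ‖w‖)| ≤
          C * (‖v‖ / ‖w‖ ^ ((n : ℝ) + 1) * sphereSupNorm n Om +
            1 / ‖w‖ ^ (n : ℝ) * modOmega n Om (2 * ‖v‖ / ‖w‖)) := by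
  obtain ⟨hχs, hχc, hχ01, hχd, hχ1, hχ0⟩ := hχ
  have hlip : LipschitzWith 2 χ := by
    apply lipschitzWith_of_nnnorm_deriv_le (hχs.differentiable (by simp))
    intro x
    have h := hχd x
    rw [← Real.norm_eq_abs] at h
    exact_mod_cast h
  have hχle1 : ∀ s, |χ s| ≤ 1 := fun s => by
    rw [abs_of_nonneg (hχ01 s).1]; exact (hχ01 s).2
  have hEpos : (0:ℝ) < Real.exp 8 := Real.exp_pos 8
  refine ⟨(n:ℝ) * Real.exp 8 * 2 ^ ((n:ℝ)+1) + 9 * Real.exp 8 + 1, by positivity, ?_⟩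
  intro Om hom hbd β r v w hβ hβn hr hv hw
  obtain ⟨M₀, hM₀⟩ := hbd
  have ht2 : (0:ℝ) < ‖w‖ := lt_of_lt_of_le (by linarith) hw
  have hw0 : w ≠ 0 := norm_pos_iff.mp ht2
  have hvle : ‖v‖ ≤ ‖w‖ / 2 := le_trans hv (by linarith)
  have ht1low : ‖w‖ / 2 ≤ ‖w - v‖ := by
    have h := norm_sub_norm_le w v
    linarith
  have ht1 : (0:ℝ) < ‖w - v‖ := lt_of_lt_of_le (by linarith) ht1low
  have hwv0 : w - v ≠ 0 := norm_pos_iff.mp ht1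
  have ht2le : ‖w‖ ≤ 2 * ‖w - v‖ := by linarith
  have htmax : ‖w - v‖ ≤ 2 * ‖w‖ := by
    have h := norm_sub_le w v
    linarith
  have htdiff : |‖w - v‖ - ‖w‖| ≤ ‖v‖ := by
    have h := abs_norm_sub_norm_le (w - v) w
    have h2 : (w - v) - w = -v := by abel
    rwa [h2, norm_neg] at h
  set u1 : EuclideanSpace ℝ (Fin n) := ‖w - v‖⁻¹ • (w - v) with hu1def
  set u2 : EuclideanSpace ℝ (Fin n) := ‖w‖⁻¹ • w with hu2def
  have hu1 : ‖u1‖ = 1 := by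
    rw [hu1def, norm_smul, Real.norm_eq_abs, abs_of_pos (inv_pos.mpr ht1),
      inv_mul_cancel₀ ht1.ne']
  have hu2 : ‖u2‖ = 1 := by
    rw [hu2def, norm_smul, Real.norm_eq_abs, abs_of_pos (inv_pos.mpr ht2),
      inv_mul_cancel₀ ht2.ne']
  have hu1ne : u1 ≠ 0 := by intro h0; rw [h0] at hu1; simp at hu1
  have hu2ne : u2 ≠ 0 := by intro h0; rw [h0] at hu2; simp at hu2
  have hOm1 : Om (w - v) = Om u1 := by
    have h := hom ‖w - v‖ ht1 u1 hu1ne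
    have hsm : ‖w - v‖ • u1 = w - v := by
      rw [hu1def, smul_smul, mul_inv_cancel₀ ht1.ne', one_smul]
    rw [hsm] at h
    exact h
  have hOm2 : Om w = Om u2 := by
    have h := hom ‖w‖ ht2 u2 hu2ne
    have hsm : ‖w‖ • u2 = w := by
      rw [hu2def, smul_smul, mul_inv_cancel₀ ht2.ne', one_smul]
    rw [hsm] at h
    exact h
  have hMbdd : BddAbove {t : ℝ | ∃ x : EuclideanSpace ℝ (Fin n), ‖x‖ = 1 ∧ t = |Om x|} :=
    ⟨M₀, fun t ⟨x, hx, htx⟩ => htx ▸ hM₀ x hx⟩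
  have hM1 : |Om u1| ≤ sphereSupNorm n Om := le_csSup hMbdd ⟨u1, hu1, rfl⟩
  have hM0 : 0 ≤ sphereSupNorm n Om := le_trans (abs_nonneg _) hM1
  have hωbdd : BddAbove {t : ℝ | ∃ x y : EuclideanSpace ℝ (Fin n),
      ‖x‖ = 1 ∧ ‖y‖ = 1 ∧ ‖x - y‖ ≤ 2 * ‖v‖ / ‖w‖ ∧ t = |Om x - Om y|} := by
    refine ⟨2 * M₀, ?_⟩
    rintro t ⟨x, y, hx, hy, -, rfl⟩
    calc |Om x - Om y| ≤ |Om x| + |Om y| := abs_sub _ _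
      _ ≤ M₀ + M₀ := add_le_add (hM₀ x hx) (hM₀ y hy)
      _ = 2 * M₀ := by ring
  have hω1 : |Om u1 - Om u2| ≤ modOmega n Om (2 * ‖v‖ / ‖w‖) := by
    apply le_csSup hωbdd
    refine ⟨u1, u2, hu1, hu2, ?_, rfl⟩
    have h := unit_diff_le (w - v) w hwv0 hw0
    have h2 : (w - v) - w = -v := by abel
    rw [h2, norm_neg] at h
    exact h
  have hω0 : 0 ≤ modOmega n Om (2 * ‖v‖ / ‖w‖) := by
    apply le_csSup hωbdd
    refine ⟨u1, u1, hu1, hu1, by simp; positivity, by simp⟩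
  have hsupp : ∀ t : ℝ, 0 < t → 2 < β * t → χ (β * t) = 0 := fun t ht h =>
    hχ0 _ (by rw [abs_of_pos (by positivity)]; exact h)
  have hTsplit : ‖w‖ ^ ((n:ℝ) + 1) = ‖w‖ ^ (n:ℝ) * ‖w‖ := by
    rw [Real.rpow_add ht2, Real.rpow_one]
  have hpow2 : β * ‖w‖ ≤ 8 → ‖w‖ ^ (β - (n:ℝ)) ≤ Real.exp 8 / ‖w‖ ^ (n:ℝ) := by
    intro h8
    have hsplit : ‖w‖ ^ (β - (n:ℝ)) = ‖w‖ ^ β * (‖w‖ ^ (n:ℝ))⁻¹ := by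
      rw [sub_eq_add_neg, Real.rpow_add ht2, Real.rpow_neg ht2.le]
    rw [hsplit, div_eq_mul_inv]
    gcongr
    exact rpow_le_exp_eight hβ ht2 h8
  -- Piece 1
  have E1 : |‖w - v‖ ^ (β - (n:ℝ)) - ‖w‖ ^ (β - (n:ℝ))| * |χ (β * ‖w - v‖)| ≤
      (n:ℝ) * Real.exp 8 * 2 ^ ((n:ℝ)+1) * ‖v‖ / ‖w‖ ^ ((n:ℝ)+1) := by
    by_cases hc : χ (β * ‖w - v‖) = 0
    · rw [hc, abs_zero, mul_zero]; positivity
    · have hb1 : β * ‖w - v‖ ≤ 2 := by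
        by_contra hcon; exact hc (hsupp _ ht1 (lt_of_not_ge hcon))
      have hder : ∀ x : ℝ, ‖w‖ / 2 ≤ x → x ≤ max ‖w - v‖ ‖w‖ →
          |β - (n:ℝ)| * x ^ (β - (n:ℝ) - 1) ≤
            (n:ℝ) * Real.exp 8 * 2 ^ ((n:ℝ)+1) / ‖w‖ ^ ((n:ℝ)+1) := by
        intro x hx1 hx2
        have hx0 : (0:ℝ) < x := lt_of_lt_of_le (by linarith) hx1
        have habs : |β - (n:ℝ)| ≤ (n:ℝ) := by
          rw [abs_of_neg (by linarith)]; linarith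
        have hxsplit : x ^ (β - (n:ℝ) - 1) = x ^ β * x ^ (-((n:ℝ)+1)) := by
          rw [← Real.rpow_add hx0]; ring_nf
        have hxle : x ≤ 2 * ‖w‖ := le_trans hx2 (max_le htmax (by linarith))
        have hxβ : x ^ β ≤ Real.exp 8 := by
          apply rpow_le_exp_eight hβ hx0
          nlinarith
        have hxn : x ^ (-((n:ℝ)+1)) ≤ 2 ^ ((n:ℝ)+1) / ‖w‖ ^ ((n:ℝ)+1) := by
          have h1 : x ^ (-((n:ℝ)+1)) ≤ (‖w‖/2) ^ (-((n:ℝ)+1)) :=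
            Real.rpow_le_rpow_of_nonpos (by positivity) hx1
              (neg_nonpos.mpr (by positivity))
          have h2 : (‖w‖/2) ^ (-((n:ℝ)+1)) = 2 ^ ((n:ℝ)+1) / ‖w‖ ^ ((n:ℝ)+1) := by
            rw [Real.rpow_neg (by positivity), Real.div_rpow ht2.le (by norm_num), inv_div]
          rw [h2] at h1; exact h1
        rw [hxsplit]
        calc |β - (n:ℝ)| * (x ^ β * x ^ (-((n:ℝ)+1)))
            ≤ (n:ℝ) * (Real.exp 8 * (2 ^ ((n:ℝ)+1) / ‖w‖ ^ ((n:ℝ)+1))) := by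
              apply mul_le_mul habs ?_ (by positivity) (by positivity)
              exact mul_le_mul hxβ hxn (by positivity) hEpos.le
          _ = (n:ℝ) * Real.exp 8 * 2 ^ ((n:ℝ)+1) / ‖w‖ ^ ((n:ℝ)+1) := by ring
      have hmvt := abs_rpow_sub_rpow_le (p := β - (n:ℝ))
        (show (0:ℝ) < ‖w‖/2 by positivity) ht1low (by linarith) hder
      calc |‖w - v‖ ^ (β - (n:ℝ)) - ‖w‖ ^ (β - (n:ℝ))| * |χ (β * ‖w - v‖)|
          ≤ ((n:ℝ) * Real.exp 8 * 2 ^ ((n:ℝ)+1) / ‖w‖ ^ ((n:ℝ)+1) * |‖w - v‖ - ‖w‖|) * 1 :=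
            mul_le_mul hmvt (hχle1 _) (abs_nonneg _) (by positivity)
        _ = (n:ℝ) * Real.exp 8 * 2 ^ ((n:ℝ)+1) / ‖w‖ ^ ((n:ℝ)+1) * |‖w - v‖ - ‖w‖| :=
            mul_one _
        _ ≤ (n:ℝ) * Real.exp 8 * 2 ^ ((n:ℝ)+1) / ‖w‖ ^ ((n:ℝ)+1) * ‖v‖ := by
            gcongr
        _ = (n:ℝ) * Real.exp 8 * 2 ^ ((n:ℝ)+1) * ‖v‖ / ‖w‖ ^ ((n:ℝ)+1) := by ring
  -- Piece 2
  have E2 : ‖w‖ ^ (β - (n:ℝ)) * |χ (β * ‖w - v‖) - χ (β * ‖w‖)| ≤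
      8 * Real.exp 8 * ‖v‖ / ‖w‖ ^ ((n:ℝ)+1) := by
    by_cases hc : χ (β * ‖w - v‖) = χ (β * ‖w‖)
    · rw [hc, sub_self, abs_zero, mul_zero]; positivity
    · have hb2 : β * ‖w‖ ≤ 4 := by
        by_contra hcon
        push_neg at hcon
        have h1 : χ (β * ‖w‖) = 0 := hsupp _ ht2 (by linarith)
        have hm := mul_le_mul_of_nonneg_left ht1low hβ.le
        have h2 : χ (β * ‖w - v‖) = 0 := hsupp _ ht1 (by linarith)
        exact hc (h2.trans h1.symm)
      have hχd2 : |χ (β * ‖w - v‖) - χ (β * ‖w‖)| ≤ 2 * (β * ‖v‖) := by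
        have h := hlip.dist_le_mul (β * ‖w - v‖) (β * ‖w‖)
        simp only [Real.dist_eq, NNReal.coe_two] at h
        have h2 : |β * ‖w - v‖ - β * ‖w‖| = β * |‖w - v‖ - ‖w‖| := by
          rw [← mul_sub, abs_mul, abs_of_pos hβ]
        calc |χ (β * ‖w - v‖) - χ (β * ‖w‖)| ≤ 2 * |β * ‖w - v‖ - β * ‖w‖| := h
          _ = 2 * (β * |‖w - v‖ - ‖w‖|) := by rw [h2]
          _ ≤ 2 * (β * ‖v‖) := by gcongr
      have hβle : β ≤ 4 / ‖w‖ := (le_div_iff₀ ht2).mpr hb2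
      calc ‖w‖ ^ (β - (n:ℝ)) * |χ (β * ‖w - v‖) - χ (β * ‖w‖)|
          ≤ (Real.exp 8 / ‖w‖ ^ (n:ℝ)) * (2 * (β * ‖v‖)) :=
            mul_le_mul (hpow2 (by linarith)) hχd2 (abs_nonneg _) (by positivity)
        _ ≤ (Real.exp 8 / ‖w‖ ^ (n:ℝ)) * (2 * ((4 / ‖w‖) * ‖v‖)) := by gcongr
        _ = 8 * Real.exp 8 * ‖v‖ / (‖w‖ ^ (n:ℝ) * ‖w‖) := by ring
        _ = 8 * Real.exp 8 * ‖v‖ / ‖w‖ ^ ((n:ℝ)+1) := by rw [hTsplit]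
  -- Piece 3
  have E3 : ‖w‖ ^ (β - (n:ℝ)) * χ (β * ‖w‖) ≤ Real.exp 8 / ‖w‖ ^ (n:ℝ) := by
    by_cases hc : χ (β * ‖w‖) = 0
    · rw [hc, mul_zero]; positivity
    · have hb : β * ‖w‖ ≤ 2 := by
        by_contra hcon; exact hc (hsupp _ ht2 (lt_of_not_ge hcon))
      calc ‖w‖ ^ (β - (n:ℝ)) * χ (β * ‖w‖) ≤ ‖w‖ ^ (β - (n:ℝ)) * 1 :=
            mul_le_mul_of_nonneg_left (hχ01 _).2 (Real.rpow_nonneg ht2.le _)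
        _ = ‖w‖ ^ (β - (n:ℝ)) := mul_one _
        _ ≤ Real.exp 8 / ‖w‖ ^ (n:ℝ) := hpow2 (by linarith)
  have E3nn : 0 ≤ ‖w‖ ^ (β - (n:ℝ)) * χ (β * ‖w‖) :=
    mul_nonneg (Real.rpow_nonneg ht2.le _) (hχ01 _).1
  -- Assembly
  rw [hOm1, hOm2]
  have key : Om u1 * ‖w - v‖ ^ (β - (n:ℝ)) * χ (β * ‖w - v‖) -
      Om u2 * ‖w‖ ^ (β - (n:ℝ)) * χ (β * ‖w‖) =
      Om u1 * ((‖w - v‖ ^ (β - (n:ℝ)) - ‖w‖ ^ (β - (n:ℝ))) * χ (β * ‖w - v‖) +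
        ‖w‖ ^ (β - (n:ℝ)) * (χ (β * ‖w - v‖) - χ (β * ‖w‖))) +
      (Om u1 - Om u2) * (‖w‖ ^ (β - (n:ℝ)) * χ (β * ‖w‖)) := by ring
  rw [key]
  have hbr : |(‖w - v‖ ^ (β - (n:ℝ)) - ‖w‖ ^ (β - (n:ℝ))) * χ (β * ‖w - v‖) +
      ‖w‖ ^ (β - (n:ℝ)) * (χ (β * ‖w - v‖) - χ (β * ‖w‖))| ≤
      ((n:ℝ) * Real.exp 8 * 2 ^ ((n:ℝ)+1) + 8 * Real.exp 8) * ‖v‖ / ‖w‖ ^ ((n:ℝ)+1) := by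
    calc |(‖w - v‖ ^ (β - (n:ℝ)) - ‖w‖ ^ (β - (n:ℝ))) * χ (β * ‖w - v‖) +
        ‖w‖ ^ (β - (n:ℝ)) * (χ (β * ‖w - v‖) - χ (β * ‖w‖))|
        ≤ |(‖w - v‖ ^ (β - (n:ℝ)) - ‖w‖ ^ (β - (n:ℝ))) * χ (β * ‖w - v‖)| +
          |‖w‖ ^ (β - (n:ℝ)) * (χ (β * ‖w - v‖) - χ (β * ‖w‖))| := abs_add_le _ _
      _ = |‖w - v‖ ^ (β - (n:ℝ)) - ‖w‖ ^ (β - (n:ℝ))| * |χ (β * ‖w - v‖)| +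
          ‖w‖ ^ (β - (n:ℝ)) * |χ (β * ‖w - v‖) - χ (β * ‖w‖)| := by
          rw [abs_mul, abs_mul, abs_of_nonneg (Real.rpow_nonneg ht2.le _)]
      _ ≤ (n:ℝ) * Real.exp 8 * 2 ^ ((n:ℝ)+1) * ‖v‖ / ‖w‖ ^ ((n:ℝ)+1) +
          8 * Real.exp 8 * ‖v‖ / ‖w‖ ^ ((n:ℝ)+1) := add_le_add E1 E2
      _ = ((n:ℝ) * Real.exp 8 * 2 ^ ((n:ℝ)+1) + 8 * Real.exp 8) * ‖v‖ / ‖w‖ ^ ((n:ℝ)+1) := by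
          ring
  calc |Om u1 * ((‖w - v‖ ^ (β - (n:ℝ)) - ‖w‖ ^ (β - (n:ℝ))) * χ (β * ‖w - v‖) +
        ‖w‖ ^ (β - (n:ℝ)) * (χ (β * ‖w - v‖) - χ (β * ‖w‖))) +
      (Om u1 - Om u2) * (‖w‖ ^ (β - (n:ℝ)) * χ (β * ‖w‖))|
      ≤ |Om u1| * |(‖w - v‖ ^ (β - (n:ℝ)) - ‖w‖ ^ (β - (n:ℝ))) * χ (β * ‖w - v‖) +
          ‖w‖ ^ (β - (n:ℝ)) * (χ (β * ‖w - v‖) - χ (β * ‖w‖))| +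
        |Om u1 - Om u2| * (‖w‖ ^ (β - (n:ℝ)) * χ (β * ‖w‖)) := by
        refine le_trans (abs_add_le _ _) ?_
        rw [abs_mul, abs_mul, abs_of_nonneg E3nn]
    _ ≤ sphereSupNorm n Om *
          (((n:ℝ) * Real.exp 8 * 2 ^ ((n:ℝ)+1) + 8 * Real.exp 8) * ‖v‖ / ‖w‖ ^ ((n:ℝ)+1)) +
        modOmega n Om (2 * ‖v‖ / ‖w‖) * (Real.exp 8 / ‖w‖ ^ (n:ℝ)) := by
        apply add_le_add
        · exact mul_le_mul hM1 hbr (abs_nonneg _) hM0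
        · exact mul_le_mul hω1 E3 E3nn hω0
    _ = ((n:ℝ) * Real.exp 8 * 2 ^ ((n:ℝ)+1) + 8 * Real.exp 8) *
          (‖v‖ / ‖w‖ ^ ((n:ℝ)+1) * sphereSupNorm n Om) +
        Real.exp 8 * (1 / ‖w‖ ^ (n:ℝ) * modOmega n Om (2 * ‖v‖ / ‖w‖)) := by ring
    _ ≤ ((n:ℝ) * Real.exp 8 * 2 ^ ((n:ℝ)+1) + 9 * Real.exp 8 + 1) *
          (‖v‖ / ‖w‖ ^ ((n:ℝ)+1) * sphereSupNorm n Om) +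
        ((n:ℝ) * Real.exp 8 * 2 ^ ((n:ℝ)+1) + 9 * Real.exp 8 + 1) *
          (1 / ‖w‖ ^ (n:ℝ) * modOmega n Om (2 * ‖v‖ / ‖w‖)) := by
        apply add_le_add
        · apply mul_le_mul_of_nonneg_right (by linarith)
          exact mul_nonneg (by positivity) hM0
        · apply mul_le_mul_of_nonneg_right ?_ (mul_nonneg (by positivity) hω0)
          have hp : (0:ℝ) ≤ (n:ℝ) * Real.exp 8 * 2 ^ ((n:ℝ)+1) := by positivity
          linarith
    _ = ((n:ℝ) * Real.exp 8 * 2 ^ ((n:ℝ)+1) + 9 * Real.exp 8 + 1) *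
          (‖v‖ / ‖w‖ ^ ((n:ℝ)+1) * sphereSupNorm n Om +
            1 / ‖w‖ ^ (n:ℝ) * modOmega n Om (2 * ‖v‖ / ‖w‖)) := by ring
end
end
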